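/- Let Φ be the standard normal CDF and φ the standard normal density. Define ψ(η) = η·φ(η)/Φ(η) + φ(η)²/Φ(η)². Then for every η ∈ ℝ, ψ(η) > 0, and for any M > 0 and all η with |η| ≤ M, ψ(η) ≥ M·φ(M)/Φ(M) + φ(M)²/Φ(M)². -/

import Mathlib

open MeasureTheory

/-- Standard normal density. -/
noncomputable def stdNormalPDF (x : ℝ) : ℝ := Real.exp (-(x ^ 2) / 2) / Real.sqrt (2 * Real.pi)

/-- Standard normal CDF. -/
noncomputable def stdNormalCDF (x : ℝ) : ℝ := ∫ t in Set.Iic x, stdNormalPDF t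

/-!
Write `q x = x + φ x / Φ x`. Then `ψ = (q - x) q` with `q - x = φ / Φ > 0`, `q` solves the
Riccati equation `q' = 1 + x q - q²`, and `ψ' = -(q - x)(2q² - x q - 1)`. So both claims follow
once `q` exceeds the positive root `k` of `2t² - x t - 1`. This root is a strict subsolution of
the Riccati equation, so `q - k` increases wherever it is nonpositive; as `q ≥ 0` (the Mills
bound `Φ x ≤ φ x / |x|` for `x < 0`) and `k → 0` at `-∞`, `q - k` never becomes nonpositive.
-/

open Real Set Filter Topology

local notation "φ" => stdNormalPDF
local notation "Φ" => stdNormalCDF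

theorem pos_of_deriv_pos_of_nonpos {f f' g : ℝ → ℝ} (hf : ∀ x, HasDerivAt f (f' x) x)
    (hf' : ∀ x, f x ≤ 0 → 0 < f' x) (hg : Tendsto g atBot (𝓝 0)) (hgf : ∀ x, g x ≤ f x)
    (x : ℝ) : 0 < f x := by
  have hnonneg : ∀ x, 0 ≤ f x := by
    intro x₀
    by_contra! hx₀
    -- the fencing theorem for `t ↦ f (-t)`: left of `x₀`, `f` stays below `f x₀ < 0`
    have hle : ∀ y ≤ x₀, f y ≤ f x₀ := by
      intro y hy
      have hrefl : ∀ t, HasDerivAt (fun t => f (-t)) (-f' (-t)) t := fun t => by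
        simpa [Function.comp_def] using (hf (-t)).comp t (hasDerivAt_neg t)
      have := image_le_of_deriv_right_lt_deriv_boundary (a := -x₀) (b := -y)
        (fun t _ => (hrefl t).continuousAt.continuousWithinAt)
        (fun t _ => (hrefl t).hasDerivWithinAt) (B := fun _ => f x₀) (B' := fun _ => 0)
        (by simp) (fun _ => hasDerivAt_const _ _)
        (fun t _ ht => neg_neg_of_pos (hf' _ (ht.le.trans hx₀.le)))
        (x := -y) ⟨by linarith, le_rfl⟩
      simpa using this
    have : 0 ≤ f x₀ := le_of_tendsto hg
      (eventually_atBot.2 ⟨x₀, fun y hy => (hgf y).trans (hle y hy)⟩)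
    linarith
  refine (hnonneg x).lt_of_ne fun hx => ?_
  have hmin : IsLocalMin f x := Eventually.of_forall fun y => hx ▸ hnonneg y
  exact (hf' x hx.ge).ne' (hmin.hasDerivAt_eq_zero (hf x))

lemma stdNormalPDF_pos (x : ℝ) : 0 < φ x := by
  unfold stdNormalPDF; positivity

lemma continuous_stdNormalPDF : Continuous φ := by
  unfold stdNormalPDF; fun_prop

lemma integrable_stdNormalPDF : Integrable φ := by
  have h := (integrable_exp_neg_mul_sq (b := 1 / 2) (by norm_num)).div_const √(2 * π)
  refine h.congr (Eventually.of_forall fun x => ?_)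
  rw [stdNormalPDF]
  ring_nf

lemma hasDerivAt_stdNormalPDF (x : ℝ) : HasDerivAt φ (-x * φ x) x := by
  have h := (((hasDerivAt_pow 2 x).neg.div_const 2).exp).div_const √(2 * π)
  refine h.congr_deriv ?_
  simp only [stdNormalPDF, Pi.neg_apply]
  ring

lemma tendsto_stdNormalPDF_atBot : Tendsto φ atBot (𝓝 0) := by
  have h : Tendsto (fun x : ℝ => -(x ^ 2) / 2) atBot atBot := by
    simpa [Function.comp_def, ← sq] using (tendsto_neg_atTop_atBot.comp
      (tendsto_id.atBot_mul_atBot₀ tendsto_id)).atBot_div_const (two_pos : (0 : ℝ) < 2)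
  have hφ := (tendsto_exp_atBot.comp h).div_const √(2 * π)
  rw [zero_div] at hφ
  exact hφ

lemma stdNormalCDF_sub_stdNormalCDF (a b : ℝ) : Φ b - Φ a = ∫ t in a..b, φ t :=
  intervalIntegral.integral_Iic_sub_Iic integrable_stdNormalPDF.integrableOn
    integrable_stdNormalPDF.integrableOn

lemma hasDerivAt_stdNormalCDF (x : ℝ) : HasDerivAt Φ (φ x) x := by
  have hΦ : Φ = fun y => Φ 0 + ∫ t in (0 : ℝ)..y, φ t := by
    funext y
    rw [← stdNormalCDF_sub_stdNormalCDF, add_sub_cancel]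
  rw [hΦ]
  exact (intervalIntegral.integral_hasDerivAt_right
    integrable_stdNormalPDF.intervalIntegrable
    (continuous_stdNormalPDF.stronglyMeasurableAtFilter _ _)
    continuous_stdNormalPDF.continuousAt).const_add _

lemma stdNormalCDF_pos (x : ℝ) : 0 < Φ x := by
  have hsupp : Function.support φ = univ :=
    Function.support_eq_univ fun t => (stdNormalPDF_pos t).ne'
  rw [stdNormalCDF, setIntegral_pos_iff_support_of_nonneg_ae
    (Eventually.of_forall fun t => (stdNormalPDF_pos t).le)
    integrable_stdNormalPDF.integrableOn, hsupp, univ_inter, volume_Iic]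
  exact ENNReal.zero_lt_top

lemma tendsto_stdNormalCDF_atBot : Tendsto Φ atBot (𝓝 0) := by
  have h : Tendsto (fun a => ∫ t in a..0, φ t) atBot (𝓝 (Φ 0)) :=
    intervalIntegral_tendsto_integral_Iic 0 integrable_stdNormalPDF.integrableOn tendsto_id
  have hΦ : Φ = fun a => Φ 0 - ∫ t in a..0, φ t := by
    funext a
    rw [← stdNormalCDF_sub_stdNormalCDF, sub_sub_cancel]
  have hlim := (tendsto_const_nhds : Tendsto (fun _ : ℝ => Φ 0) atBot _).sub h
  rwa [sub_self, ← hΦ] at hlim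

lemma stdNormalCDF_le_neg_stdNormalPDF_div {x : ℝ} (hx : x < 0) : Φ x ≤ -(φ x / x) := by
  set F : ℝ → ℝ := fun y => Φ y + φ y / y
  have hF : ∀ y < 0, HasDerivAt F (-(φ y / y ^ 2)) y := fun y hy => by
    refine ((hasDerivAt_stdNormalCDF y).add
      ((hasDerivAt_stdNormalPDF y).div (hasDerivAt_id y) hy.ne)).congr_deriv ?_
    simp only [id_eq]
    field_simp [hy.ne]
    ring
  have hanti : AntitoneOn F (Iio 0) := by
    refine antitoneOn_of_deriv_nonpos (convex_Iio 0)
      (fun y hy => (hF y hy).continuousAt.continuousWithinAt) ?_ ?_ <;> rw [interior_Iio]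
    · exact fun y hy => (hF y hy).differentiableAt.differentiableWithinAt
    · intro y hy
      rw [(hF y hy).deriv, neg_nonpos]
      exact div_nonneg (stdNormalPDF_pos y).le (sq_nonneg y)
  have hlim : Tendsto F atBot (𝓝 0) := by
    simpa using
      tendsto_stdNormalCDF_atBot.add (tendsto_stdNormalPDF_atBot.div_atBot tendsto_id)
  have : F x ≤ 0 := ge_of_tendsto hlim
    (eventually_atBot.2 ⟨x, fun y hy => hanti (hy.trans_lt hx) hx hy⟩)
  simp only [F] at this
  linarith

/-- The mean inactivity time `E[x - Z | Z ≤ x]` of a standard normal `Z`. -/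
noncomputable def meanInactivityTime (x : ℝ) : ℝ := x + φ x / Φ x

local notation "q" => meanInactivityTime

lemma hasDerivAt_meanInactivityTime (x : ℝ) :
    HasDerivAt q (1 - (q x - x) * q x) x := by
  have hΦ := (stdNormalCDF_pos x).ne'
  refine ((hasDerivAt_id x).add ((hasDerivAt_stdNormalPDF x).div
    (hasDerivAt_stdNormalCDF x) hΦ)).congr_deriv ?_
  simp only [meanInactivityTime]
  field_simp
  ring

lemma meanInactivityTime_sub_self_pos (x : ℝ) : 0 < q x - x := by
  simpa [meanInactivityTime] using div_pos (stdNormalPDF_pos x) (stdNormalCDF_pos x)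

lemma meanInactivityTime_nonneg (x : ℝ) : 0 ≤ q x := by
  have hΦ := stdNormalCDF_pos x
  have hH : 0 ≤ x * Φ x + φ x := by
    rcases le_or_gt 0 x with hx | hx
    · nlinarith [stdNormalPDF_pos x]
    · have := mul_le_mul_of_nonpos_left (stdNormalCDF_le_neg_stdNormalPDF_div hx) hx.le
      rw [mul_neg, mul_div_cancel₀ _ hx.ne] at this
      linarith
  have : q x = (x * Φ x + φ x) / Φ x := by
    rw [meanInactivityTime]
    field_simp
  rw [this]
  positivity

noncomputable def inactivityBound (x : ℝ) : ℝ := (x + √(x ^ 2 + 8)) / 4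

local notation "k" => inactivityBound

section inactivityBound

variable (x : ℝ)

lemma sqrt_sq_add_eight_sub_pos : 0 < √(x ^ 2 + 8) - x := by
  have h : √(x ^ 2) < √(x ^ 2 + 8) := Real.sqrt_lt_sqrt (sq_nonneg x) (by linarith)
  rw [Real.sqrt_sq_eq_abs] at h
  linarith [le_abs_self x]

lemma inactivityBound_eq : k x = 2 / (√(x ^ 2 + 8) - x) := by
  have hb := Real.sq_sqrt (show 0 ≤ x ^ 2 + 8 by positivity)
  rw [inactivityBound, eq_div_iff (sqrt_sq_add_eight_sub_pos x).ne']
  linear_combination hb / 4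

lemma inactivityBound_pos : 0 < k x := by
  rw [inactivityBound_eq]
  exact div_pos two_pos (sqrt_sq_add_eight_sub_pos x)

lemma inactivityBound_root : 2 * k x ^ 2 - x * k x - 1 = 0 := by
  have hb := Real.sq_sqrt (show 0 ≤ x ^ 2 + 8 by positivity)
  rw [inactivityBound]
  linear_combination hb / 8

lemma hasDerivAt_inactivityBound : HasDerivAt k (k x / √(x ^ 2 + 8)) x := by
  have h := ((hasDerivAt_id x).add
    (((hasDerivAt_pow 2 x).add_const 8).sqrt (by positivity))).div_const 4
  refine h.congr_deriv ?_
  simp only [inactivityBound]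
  field_simp
  ring

lemma tendsto_inactivityBound_atBot : Tendsto k atBot (𝓝 0) := by
  have hden : Tendsto (fun x : ℝ => √(x ^ 2 + 8) - x) atBot atTop :=
    tendsto_atTop_mono (fun x => by linarith [Real.sqrt_nonneg (x ^ 2 + 8)])
      tendsto_neg_atBot_atTop
  rw [funext inactivityBound_eq]
  simpa [div_eq_mul_inv] using hden.inv_tendsto_atTop.const_mul 2

lemma deriv_inactivityBound_lt : k x / √(x ^ 2 + 8) < 1 + x * k x - k x ^ 2 := by
  set b := √(x ^ 2 + 8)
  have hb : 0 < b := Real.sqrt_pos.2 (by positivity)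
  have hb2 : b ^ 2 = x ^ 2 + 8 := Real.sq_sqrt (by positivity)
  -- clearing denominators with `b² = x² + 8` turns the claim into twice `key`
  have key : 0 < b * (x ^ 2 + 2) + x * (x ^ 2 + 6) := by
    have hc : 0 < b * (x ^ 2 + 2) := by positivity
    have hsq : (b * (x ^ 2 + 2)) ^ 2 - (x * (x ^ 2 + 6)) ^ 2 = 32 := by
      linear_combination (x ^ 2 + 2) ^ 2 * hb2
    nlinarith
  rw [div_lt_iff₀ hb]
  simp only [inactivityBound]
  nlinarith

end inactivityBound

lemma inactivityBound_lt_meanInactivityTime (x : ℝ) : k x < q x := by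
  suffices 0 < q x - k x by linarith
  refine pos_of_deriv_pos_of_nonpos (f := fun y => q y - k y) (g := fun y => -k y)
    (fun y => (hasDerivAt_meanInactivityTime y).sub (hasDerivAt_inactivityBound y))
    (fun y hy => ?_) (by simpa using tendsto_inactivityBound_atBot.neg)
    (fun y => by linarith [meanInactivityTime_nonneg y]) x
  -- where `q ≤ k`, the term `(q - k)(x - q - k)` of `(q - k)'` is nonnegative
  have hpos : 0 ≤ (k y - q y) * (q y - y + k y) :=
    mul_nonneg (by linarith)
      (by linarith [meanInactivityTime_sub_self_pos y, inactivityBound_pos y])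
  nlinarith [deriv_inactivityBound_lt y]

noncomputable def psi (x : ℝ) : ℝ := x * φ x / Φ x + φ x ^ 2 / Φ x ^ 2

lemma psi_eq (x : ℝ) : psi x = (q x - x) * q x := by
  rw [psi, meanInactivityTime]
  ring

lemma psi_pos (x : ℝ) : 0 < psi x := by
  rw [psi_eq]
  exact mul_pos (meanInactivityTime_sub_self_pos x)
    ((inactivityBound_pos x).trans (inactivityBound_lt_meanInactivityTime x))

lemma hasDerivAt_psi (x : ℝ) :
    HasDerivAt psi (-(q x - x) * (2 * q x ^ 2 - x * q x - 1)) x := by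
  have hq := hasDerivAt_meanInactivityTime x
  rw [show psi = fun y => (q y - y) * q y from funext psi_eq]
  exact ((hq.fun_sub (hasDerivAt_id' x)).fun_mul hq).congr_deriv (by ring)

lemma psi_strictAnti : StrictAnti psi := by
  refine strictAnti_of_hasDerivAt_neg hasDerivAt_psi fun x => ?_
  have hkq := inactivityBound_lt_meanInactivityTime x
  have hqx := meanInactivityTime_sub_self_pos x
  have hk := inactivityBound_pos x
  -- `2q² - xq - 1 = (q - k)(2q + 2k - x)`, since `k` is a root
  have hroot : 0 < 2 * q x ^ 2 - x * q x - 1 := by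
    nlinarith [inactivityBound_root x,
      mul_pos (sub_pos.2 hkq) (show 0 < 2 * q x + 2 * k x - x by linarith)]
  nlinarith

/-- `ψ(η) = η φ(η)/Φ(η) + φ(η)²/Φ(η)²` is positive everywhere, and on `|η| ≤ M`
it is bounded below by `M φ(M)/Φ(M) + φ(M)²/Φ(M)²`. -/
theorem stmt1 :
    (∀ η : ℝ,
      0 < η * stdNormalPDF η / stdNormalCDF η + (stdNormalPDF η) ^ 2 / (stdNormalCDF η) ^ 2) ∧
    (∀ M : ℝ, 0 < M → ∀ η : ℝ, |η| ≤ M →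
      M * stdNormalPDF M / stdNormalCDF M + (stdNormalPDF M) ^ 2 / (stdNormalCDF M) ^ 2 ≤
        η * stdNormalPDF η / stdNormalCDF η + (stdNormalPDF η) ^ 2 / (stdNormalCDF η) ^ 2) :=
  ⟨psi_pos, fun _ _ η hη => psi_strictAnti.antitone ((le_abs_self η).trans hη)⟩
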